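/- Let g_{ij̄}(z) be a smooth Hermitian metric in local coordinates near a point p with g_{ij̄}(p) = δ_{ij}. Define new coordinates w_r = z_r + ∑_{m≠r} (∂g_{rr̄}/∂z_m)(p) z_m z_r + (1/2)(∂g_{rr̄}/∂z_r)(p) z_r². Then in the w-coordinates the metric g̃_{ij̄} satisfies, at p: g̃_{ij̄} = δ_{ij} and ∂g̃_{iī}/∂w_k = 0 for all i, k; moreover ∂g̃_{ij̄}/∂w_j = T^j_{ji} at p for i ≠ j, where T^j_{ji} are the torsion components in the original coordinates. -/

import Mathlib

/-!
Write `J_{ri} = ∂z_r/∂w_i`. The coordinate change reads `w_r = z_r + z_r ℓ_r(z)` with `ℓ_r`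
linear, so differentiating it once at `0` gives `J(0) = 1`, and twice gives
`∂_k J_{ri}(0) = -(δ_{ri} ∂_k ℓ_r + δ_{rk} ∂_i ℓ_r)`. Since `z` is holomorphic, so is `J` (the real
Hessian of `z` is symmetric and `ℂ`-linear in one slot, hence in both), and `conj J` is
antiholomorphic; the Leibniz and chain rules then give
`∂_k g̃_{ij̄}(0) = ∂_k g_{ij̄}(0) + ∂_k J_{ji}(0)`, into which the second derivatives of `z` are
substituted.
-/

open Matrix

/-- Wirtinger derivative `∂f/∂zᵢ`. -/
noncomputable def wD {n : ℕ} (i : Fin n) (f : (Fin n → ℂ) → ℂ) (x : Fin n → ℂ) : ℂ :=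
  (fderiv ℝ f x (Pi.single i 1) - Complex.I * fderiv ℝ f x (Pi.single i Complex.I)) / 2

open Complex ComplexConjugate Filter Topology Finset

variable {n : ℕ}

section FirstOrder

variable {f h : (Fin n → ℂ) → ℂ} {x : Fin n → ℂ}

lemma wD_congr (hfh : f =ᶠ[𝓝 x] h) (i : Fin n) : wD i f x = wD i h x := by
  rw [wD, wD, hfh.fderiv_eq]

lemma wD_const (i : Fin n) (c : ℂ) (x : Fin n → ℂ) : wD i (fun _ => c) x = 0 := by
  simp [wD]

lemma wD_coord (i r : Fin n) (x : Fin n → ℂ) :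
    wD i (fun w => w r) x = if r = i then 1 else 0 := by
  have hproj : (fun w : Fin n → ℂ => w r) = ContinuousLinearMap.proj (R := ℝ) r := rfl
  rw [wD, hproj, ContinuousLinearMap.fderiv]
  by_cases hri : r = i
  · subst hri; simp
  · simp [hri]

lemma wD_add (hf : DifferentiableAt ℝ f x) (hh : DifferentiableAt ℝ h x) (i : Fin n) :
    wD i (fun w => f w + h w) x = wD i f x + wD i h x := by
  simp only [wD, fderiv_fun_add hf hh, _root_.add_apply]; ring

lemma wD_mul (hf : DifferentiableAt ℝ f x) (hh : DifferentiableAt ℝ h x) (i : Fin n) :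
    wD i (fun w => f w * h w) x = wD i f x * h x + f x * wD i h x := by
  simp only [wD, fderiv_fun_mul hf hh, _root_.add_apply,
    _root_.smul_apply, smul_eq_mul]; ring

lemma wD_const_mul (hf : DifferentiableAt ℝ f x) (c : ℂ) (i : Fin n) :
    wD i (fun w => c * f w) x = c * wD i f x := by
  simp only [wD, fderiv_const_mul hf, _root_.smul_apply, smul_eq_mul]; ring

lemma wD_sum {ι : Type*} {s : Finset ι} {F : ι → (Fin n → ℂ) → ℂ}
    (hF : ∀ a ∈ s, DifferentiableAt ℝ (F a) x) (i : Fin n) :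
    wD i (fun w => ∑ a ∈ s, F a w) x = ∑ a ∈ s, wD i (F a) x := by
  simp only [wD, fderiv_fun_sum hF, _root_.sum_apply, mul_sum, ← sum_sub_distrib,
    sum_div]

end FirstOrder

section Holomorphic

variable {f : (Fin n → ℂ) → ℂ} {x : Fin n → ℂ}

lemma fderiv_apply_I_smul (hf : DifferentiableAt ℂ f x) (v : Fin n → ℂ) :
    fderiv ℝ f x (I • v) = I * fderiv ℝ f x v := by
  rw [hf.fderiv_restrictScalars ℝ]
  exact (fderiv ℂ f x).map_smul I v

lemma single_I_eq_I_smul (i : Fin n) : (Pi.single i I : Fin n → ℂ) = I • Pi.single i 1 := by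
  rw [← Pi.single_smul, smul_eq_mul, mul_one]

lemma wD_of_differentiableAt (hf : DifferentiableAt ℂ f x) (i : Fin n) :
    wD i f x = fderiv ℝ f x (Pi.single i 1) := by
  rw [wD, single_I_eq_I_smul, fderiv_apply_I_smul hf, ← mul_assoc, I_mul_I]; ring

lemma wD_conj_of_differentiableAt (hf : DifferentiableAt ℂ f x) (i : Fin n) :
    wD i (fun w => conj (f w)) x = 0 := by
  have hconj : fderiv ℝ (fun w => conj (f w)) x = (conjCLE : ℂ →L[ℝ] ℂ).comp (fderiv ℝ f x) :=
    conjCLE.comp_fderiv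
  rw [wD, hconj, single_I_eq_I_smul]
  simp only [ContinuousLinearMap.comp_apply, fderiv_apply_I_smul hf, ContinuousLinearEquiv.coe_coe,
    conjCLE_apply, map_mul, conj_I]
  linear_combination conj (fderiv ℝ f x (Pi.single i 1)) / 2 * I_sq

end Holomorphic

lemma realLinear_sub_I_mul (φ : ℂ →L[ℝ] ℂ) (c : ℂ) :
    φ c - I * φ (I * c) = (φ 1 - I * φ I) * c := by
  have hc : φ c = c.re * φ 1 + c.im * φ I := by
    conv_lhs => rw [show c = c.re • (1 : ℂ) + c.im • I by simp]
    rw [map_add, map_smul, map_smul, real_smul, real_smul]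
  have hIc : φ (I * c) = c.re * φ I - c.im * φ 1 := by
    rw [show I * c = c.re • I - c.im • (1 : ℂ) by simp [Complex.ext_iff], map_sub, map_smul,
      map_smul, real_smul, real_smul]
  rw [hc, hIc]
  conv_rhs => rw [← re_add_im c]
  linear_combination (c.im * φ I) * I_sq

lemma wD_comp {z : (Fin n → ℂ) → Fin n → ℂ} {f : (Fin n → ℂ) → ℂ} {x : Fin n → ℂ}
    (hz : ∀ r, DifferentiableAt ℂ (fun w => z w r) x) (hf : DifferentiableAt ℝ f (z x))
    (k : Fin n) :
    wD k (fun w => f (z w)) x = ∑ r, wD r f (z x) * wD k (fun w => z w r) x := by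
  have hzR : ∀ r, DifferentiableAt ℝ (fun w => z w r) x := fun r => (hz r).restrictScalars ℝ
  set L := fderiv ℝ f (z x)
  set a : Fin n → ℂ := fun r => wD k (fun w => z w r) x
  have hDz : ∀ v, fderiv ℝ z x v = fun r => fderiv ℝ (fun w => z w r) x v := fun v => by
    rw [fderiv_pi hzR]; rfl
  have hchain : ∀ v, fderiv ℝ (fun w => f (z w)) x v = L (fderiv ℝ z x v) := fun v => by
    rw [fderiv_fun_comp x hf (differentiableAt_pi.2 hzR)]; rfl
  have h1 : fderiv ℝ (fun w => f (z w)) x (Pi.single k 1) = L a := by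
    rw [hchain, hDz]; congr 1; funext r; exact (wD_of_differentiableAt (hz r) k).symm
  have hI : fderiv ℝ (fun w => f (z w)) x (Pi.single k I) = L (fun r => I * a r) := by
    rw [hchain, hDz, single_I_eq_I_smul]; congr 1; funext r
    rw [fderiv_apply_I_smul (hz r), ← wD_of_differentiableAt (hz r)]
  rw [wD, h1, hI, ← ContinuousLinearMap.sum_comp_single (L := L) (v := a),
    ← ContinuousLinearMap.sum_comp_single (L := L) (v := fun r => I * a r), mul_sum,
    ← sum_sub_distrib, sum_div]
  refine sum_congr rfl fun r _ => ?_
  rw [realLinear_sub_I_mul, wD, single_I_eq_I_smul]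
  simp only [ContinuousLinearMap.comp_apply, ContinuousLinearMap.single_apply, ← Pi.single_smul,
    smul_eq_mul, mul_one]
  ring

lemma differentiableAt_complex_of_fderiv_map_I_smul {V E : Type*} [NormedAddCommGroup V]
    [NormedSpace ℂ V] [NormedAddCommGroup E] [NormedSpace ℂ E] {f : V → E} {x : V}
    (hf : DifferentiableAt ℝ f x) (hI : ∀ v, fderiv ℝ f x (I • v) = I • fderiv ℝ f x v) :
    DifferentiableAt ℂ f x := by
  set D := fderiv ℝ f x
  have hsmul : ∀ (c : ℂ) v, D (c • v) = c • D v := fun c v => by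
    have hc : c • v = c.re • v + c.im • (I • v) := by
      rw [← Complex.coe_smul, ← Complex.coe_smul, smul_smul, ← add_smul, re_add_im]
    rw [hc, map_add, map_smul, map_smul, hI, ← Complex.coe_smul, ← Complex.coe_smul, smul_smul,
      ← add_smul, re_add_im]
  let D' : V →L[ℂ] E := { D with map_smul' := hsmul }
  exact (hasFDerivAt_of_restrictScalars ℝ (f' := D') hf.hasFDerivAt rfl).differentiableAt

section SecondOrder

variable {f u v : (Fin n → ℂ) → ℂ}

lemma ContDiff.differentiable_fderiv_two (hf : ContDiff ℝ 2 f) :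
    Differentiable ℝ (fderiv ℝ f) :=
  (hf.fderiv_right (by norm_num)).differentiable one_ne_zero

lemma ContDiff.differentiable_wD (hf : ContDiff ℝ 2 f) (i : Fin n) :
    Differentiable ℝ (wD i f) := by
  have hf' := hf.differentiable_fderiv_two
  unfold wD
  fun_prop

lemma wD_wD_mul (hu : ContDiff ℝ 2 u) (hv : ContDiff ℝ 2 v) (i k : Fin n) (x : Fin n → ℂ) :
    wD k (wD i fun w => u w * v w) x =
      wD k (wD i u) x * v x + wD i u x * wD k v x +
        (wD k u x * wD i v x + u x * wD k (wD i v) x) := by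
  have hu1 := hu.differentiable (by norm_num)
  have hv1 := hv.differentiable (by norm_num)
  have hu2 := hu.differentiable_wD i
  have hv2 := hv.differentiable_wD i
  have hLeibniz : (wD i fun w => u w * v w) = fun w => wD i u w * v w + u w * wD i v w :=
    funext fun w => wD_mul (hu1 w) (hv1 w) i
  rw [hLeibniz, wD_add ((hu2 x).fun_mul (hv1 x)) ((hu1 x).fun_mul (hv2 x)), wD_mul (hu2 x) (hv1 x),
    wD_mul (hu1 x) (hv2 x)]

lemma differentiableAt_wD {x : Fin n → ℂ} (hf : ContDiff ℝ 2 f)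
    (hholo : ∀ᶠ w in 𝓝 x, DifferentiableAt ℂ f w) (i : Fin n) :
    DifferentiableAt ℂ (wD i f) x := by
  set D2 := fderiv ℝ (fderiv ℝ f) x
  have hsymm : ∀ u v, D2 u v = D2 v u := hf.contDiffAt.isSymmSndFDerivAt (by simp)
  have hf' := hf.differentiable_fderiv_two
  have hdir : ∀ v, fderiv ℝ (fun w => fderiv ℝ f w v) x = D2.flip v := fun v => by
    rw [fderiv_clm_apply (hf' x) (differentiableAt_const v)]; ext; simp [D2]
  have hD2I : ∀ u v, D2 u (I • v) = I * D2 u v := fun u v => by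
    have hev : (fun w => fderiv ℝ f w (I • v)) =ᶠ[𝓝 x] fun w => I * fderiv ℝ f w v :=
      hholo.mono fun w hw => fderiv_apply_I_smul hw v
    have := congrArg (· u) ((hdir (I • v)).symm.trans hev.fderiv_eq)
    simpa [fderiv_const_mul ((hf' x).clm_apply (differentiableAt_const v)), hdir] using this
  have hev : wD i f =ᶠ[𝓝 x] fun w => fderiv ℝ f w (Pi.single i 1) :=
    hholo.mono fun w hw => wD_of_differentiableAt hw i
  refine DifferentiableAt.congr_of_eventuallyEq ?_ hev
  refine differentiableAt_complex_of_fderiv_map_I_smul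
    ((hf' x).clm_apply (differentiableAt_const _)) fun u => ?_
  simp only [hdir, ContinuousLinearMap.flip_apply, smul_eq_mul]
  rw [hsymm, hD2I, hsymm]

end SecondOrder

section Coordinates

variable {u v : (Fin n → ℂ) → ℂ} {x : Fin n → ℂ} {r : Fin n}

lemma wD_eq_of_eventuallyEq_add_mul (hu : DifferentiableAt ℝ u x) (hv : DifferentiableAt ℝ v x)
    (hu0 : u x = 0) (hv0 : v x = 0) (h : ∀ᶠ w in 𝓝 x, w r = u w + u w * v w) (i : Fin n) :
    wD i u x = if r = i then 1 else 0 := by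
  have := wD_congr h i
  rw [wD_coord, wD_add hu (hu.fun_mul hv), wD_mul hu hv, hu0, hv0] at this
  simp [this]

lemma wD_wD_eq_of_eventuallyEq_add_mul (hu : ContDiff ℝ 2 u) (hv : ContDiff ℝ 2 v)
    (hu0 : u x = 0) (hv0 : v x = 0) (h : ∀ᶠ w in 𝓝 x, w r = u w + u w * v w) (i k : Fin n) :
    wD k (wD i u) x = -(wD i u x * wD k v x + wD k u x * wD i v x) := by
  have hu1 := hu.differentiable (by norm_num)
  have huv1 := (hu.mul hv).differentiable (by norm_num)
  have hcoord : (wD i fun w => w r) = fun _ => if r = i then 1 else 0 := funext (wD_coord i r)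
  have hsplit : (wD i fun w => u w + u w * v w) = fun w => wD i u w + wD i (fun w => u w * v w) w :=
    funext fun w => wD_add (hu1 w) (huv1 w) i
  have hev : (wD i fun w => w r) =ᶠ[𝓝 x] wD i fun w => u w + u w * v w :=
    h.eventually_nhds.mono fun y hy => wD_congr hy i
  have := wD_congr hev k
  rw [hcoord, wD_const, hsplit,
    wD_add (hu.differentiable_wD i x) ((hu.mul hv).differentiable_wD i x), wD_wD_mul hu hv, hu0,
    hv0] at this
  linear_combination -this

end Coordinates

def SpecialCoordinates (a : Fin n → Fin n → ℂ) (z : (Fin n → ℂ) → Fin n → ℂ)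
    (x : Fin n → ℂ) : Prop :=
  ∀ r, ∀ᶠ w in 𝓝 x,
    w r = z w r + (∑ m ∈ univ.erase r, a r m * z w m * z w r) + 1 / 2 * a r r * z w r ^ 2

namespace SpecialCoordinates

variable {a : Fin n → Fin n → ℂ} {z : (Fin n → ℂ) → Fin n → ℂ} {x : Fin n → ℂ}

lemma eventually_eq_add_mul (h : SpecialCoordinates a z x) (r : Fin n) :
    ∀ᶠ w in 𝓝 x, w r = z w r + z w r * (∑ m ∈ univ.erase r, a r m * z w m + a r r / 2 * z w r) :=
  (h r).mono fun w hw => by rw [hw, ← sum_mul]; ring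

lemma contDiff_factor (hz : ∀ r, ContDiff ℝ 2 fun w => z w r) (r : Fin n) :
    ContDiff ℝ 2 fun w => ∑ m ∈ univ.erase r, a r m * z w m + a r r / 2 * z w r := by
  fun_prop

lemma wD_coord (h : SpecialCoordinates a z x) (hz0 : z x = 0)
    (hz : ∀ r, ContDiff ℝ 2 fun w => z w r) (i r : Fin n) :
    wD i (fun w => z w r) x = if r = i then 1 else 0 :=
  wD_eq_of_eventuallyEq_add_mul ((hz r).differentiable (by norm_num) x)
    ((contDiff_factor hz r).differentiable (by norm_num) x)
    (by simp [hz0]) (by simp [hz0]) (h.eventually_eq_add_mul r) i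

lemma wD_wD_coord (h : SpecialCoordinates a z x) (hz0 : z x = 0)
    (hz : ∀ r, ContDiff ℝ 2 fun w => z w r) (r i k : Fin n) :
    wD k (wD i fun w => z w r) x = -(if r = i then a r k else if r = k then a r i else 0) := by
  have hJ := h.wD_coord hz0 hz
  have hz1 : ∀ c m, DifferentiableAt ℝ (fun w => c * z w m) x := fun c m =>
    ((hz m).differentiable (by norm_num) x).const_mul c
  have hfactor : ∀ k, wD k (fun w => ∑ m ∈ univ.erase r, a r m * z w m + a r r / 2 * z w r) x =
      if k = r then a r r / 2 else a r k := fun k => by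
    rw [wD_add (DifferentiableAt.fun_sum fun m _ => hz1 _ m) (hz1 _ r),
      wD_sum fun m _ => hz1 _ m]
    simp only [wD_const_mul ((hz _).differentiable (by norm_num) x), hJ]
    by_cases hkr : k = r
    · simp [hkr]
    · simp [hkr, Ne.symm hkr]
  rw [wD_wD_eq_of_eventuallyEq_add_mul (hz r) (contDiff_factor hz r) (by simp [hz0])
    (by simp [hz0]) (h.eventually_eq_add_mul r), hJ, hJ, hfactor, hfactor]
  by_cases hri : r = i
  · subst hri
    by_cases hrk : r = k
    · subst hrk; simp
    · simp [hrk, Ne.symm hrk]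
  · by_cases hrk : r = k
    · subst hrk; simp [hri, Ne.symm hri]
    · simp [hri, hrk]

end SpecialCoordinates

noncomputable def pullbackMetric (g : (Fin n → ℂ) → Matrix (Fin n) (Fin n) ℂ)
    (z : (Fin n → ℂ) → Fin n → ℂ) (i j : Fin n) (w : Fin n → ℂ) : ℂ :=
  ∑ r, ∑ s, g (z w) r s * wD i (fun w' => z w' r) w * conj (wD j (fun w' => z w' s) w)

section PullbackMetric

variable {g : (Fin n → ℂ) → Matrix (Fin n) (Fin n) ℂ} {z : (Fin n → ℂ) → Fin n → ℂ}
  {x : Fin n → ℂ}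

lemma pullbackMetric_eq_of_jacobian_eq_one (hg1 : g (z x) = 1)
    (hJ : ∀ i r, wD i (fun w => z w r) x = if r = i then 1 else 0) (i j : Fin n) :
    pullbackMetric g z i j x = if i = j then 1 else 0 := by
  simp [pullbackMetric, hg1, hJ, Matrix.one_apply]

lemma wD_pullbackMetric_of_jacobian_eq_one
    (hg : ∀ r s, DifferentiableAt ℝ (fun y => g y r s) (z x)) (hg1 : g (z x) = 1)
    (hz : ∀ r, DifferentiableAt ℂ (fun w => z w r) x)
    (hJ : ∀ i r, wD i (fun w => z w r) x = if r = i then 1 else 0)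
    (hJholo : ∀ i r, DifferentiableAt ℂ (wD i fun w => z w r) x) (i j k : Fin n) :
    wD k (pullbackMetric g z i j) x =
      wD k (fun y => g y i j) (z x) + wD k (wD i fun w => z w j) x := by
  have hG : ∀ r s, DifferentiableAt ℝ (fun w => g (z w) r s) x := fun r s =>
    (hg r s).comp x (differentiableAt_pi.2 fun r => (hz r).restrictScalars ℝ)
  have hJR : ∀ i r, DifferentiableAt ℝ (wD i fun w => z w r) x := fun i r =>
    (hJholo i r).restrictScalars ℝ
  have hJc : ∀ s, DifferentiableAt ℝ (fun w => conj (wD j (fun w' => z w' s) w)) x := fun s =>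
    (hJR j s).star
  have hsummand : ∀ r s, DifferentiableAt ℝ
      (fun w => g (z w) r s * wD i (fun w' => z w' r) w * conj (wD j (fun w' => z w' s) w)) x :=
    fun r s => ((hG r s).fun_mul (hJR i r)).fun_mul (hJc s)
  have hterm : ∀ r s,
      wD k (fun w => g (z w) r s * wD i (fun w' => z w' r) w * conj (wD j (fun w' => z w' s) w)) x =
        (wD k (fun y => g y r s) (z x) * (if r = i then 1 else 0) +
          (if r = s then 1 else 0) * wD k (wD i fun w => z w r) x) * (if s = j then 1 else 0) :=
    fun r s => by
      rw [wD_mul ((hG r s).fun_mul (hJR i r)) (hJc s),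
        wD_mul (hG r s) (hJR i r), wD_conj_of_differentiableAt (hJholo j s), wD_comp hz (hg r s)]
      simp [hJ, hg1, Matrix.one_apply]
  unfold pullbackMetric
  rw [wD_sum fun r _ => DifferentiableAt.fun_sum fun s _ => hsummand r s]
  simp only [wD_sum fun s _ => hsummand _ s, hterm]
  simp [sum_add_distrib]

end PullbackMetric

/-- Special coordinates: with `g_{ij̄}(0) = δᵢⱼ` and new coordinates
`w_r = z_r + ∑_{m≠r} ∂g_{rr̄}/∂z_m(0) z_m z_r + ½ ∂g_{rr̄}/∂z_r(0) z_r²`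
(here `z = z(w)` is the inverse holomorphic coordinate map), the transformed
metric `g̃_{ij̄}(w) = ∑ g_{rs̄}(z(w)) ∂z_r/∂wᵢ conj(∂z_s/∂wⱼ)` satisfies at `0`:
`g̃_{ij̄} = δᵢⱼ`, `∂g̃_{iī}/∂w_k = 0`, and `∂g̃_{ij̄}/∂wⱼ = T^j_{ji}
= ∂g_{ij̄}/∂zⱼ − ∂g_{jj̄}/∂zᵢ` for `i ≠ j`. -/
theorem stmt8 (n : ℕ) (g : (Fin n → ℂ) → Matrix (Fin n) (Fin n) ℂ)
    (hg : ∀ k l, ContDiff ℝ 2 fun z => g z k l)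
    (hg0 : g 0 = 1)
    (z : (Fin n → ℂ) → (Fin n → ℂ)) (hz0 : z 0 = 0)
    (hzsmooth : ∀ r, ContDiff ℝ 2 fun w => z w r)
    (hzholo : ∀ r, ∀ᶠ w in nhds 0, DifferentiableAt ℂ (fun w' => z w' r) w)
    (hcoord : ∀ r, ∀ᶠ w in nhds (0 : Fin n → ℂ),
      w r = z w r + (∑ m ∈ Finset.univ.erase r,
          wD m (fun y => g y r r) 0 * z w m * z w r)
        + (1 / 2) * wD r (fun y => g y r r) 0 * (z w r) ^ 2) :
    (let gt : Fin n → Fin n → (Fin n → ℂ) → ℂ := fun i j w =>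
       ∑ r, ∑ s, g (z w) r s * wD i (fun w' => z w' r) w *
         (starRingEnd ℂ) (wD j (fun w' => z w' s) w)
     (∀ i j, gt i j 0 = if i = j then 1 else 0) ∧
     (∀ i k, wD k (gt i i) 0 = 0) ∧
     (∀ i j, i ≠ j → wD j (gt i j) 0 =
        wD j (fun y => g y i j) 0 - wD i (fun y => g y j j) 0)) := by
  intro gt
  have hspecial : SpecialCoordinates (fun r m => wD m (fun y => g y r r) 0) z 0 := hcoord
  have hg1 : g (z 0) = 1 := by rw [hz0, hg0]
  have hJ := hspecial.wD_coord hz0 hzsmooth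
  have hdJ := hspecial.wD_wD_coord hz0 hzsmooth
  have hdgt : ∀ i j k,
      wD k (gt i j) 0 = wD k (fun y => g y i j) 0 + wD k (wD i fun w => z w j) 0 := fun i j k => by
    have := wD_pullbackMetric_of_jacobian_eq_one
      (fun r s => ((hg r s).differentiable (by norm_num)).differentiableAt) hg1
      (fun r => (hzholo r).self_of_nhds) hJ
      (fun i r => differentiableAt_wD (hzsmooth r) (hzholo r) i) i j k
    rwa [hz0] at this
  refine ⟨pullbackMetric_eq_of_jacobian_eq_one hg1 hJ, fun i k => ?_, fun i j hij => ?_⟩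
  · rw [hdgt, hdJ]; simp
  · rw [hdgt, hdJ, if_neg hij.symm, if_pos rfl, sub_eq_add_neg]
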